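/- Let (p_n) be a sequence in (0,1) with p_n → 0, and let C_P ⊂ [0,1] be the generalized Cantor set obtained by iteratively removing central parts of relative length p_n. Then the Hausdorff dimension of C_P equals 1. -/

import Mathlib

open Filter MeasureTheory

/-- Length of a rank-`n` interval: `λ_n = ∏_{j<n} (1 - p j)/2` (so `λ_0 = 1`). -/
noncomputable def lam (p : ℕ → ℝ) (n : ℕ) : ℝ := ∏ j ∈ Finset.range n, (1 - p j) / 2

/-- Left endpoint of the rank-`n` interval coded by the binary string `s`. -/
noncomputable def leftPt (p : ℕ → ℝ) {n : ℕ} (s : Fin n → Bool) : ℝ :=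
  ∑ i : Fin n, if s i then lam p i - lam p (i + 1) else 0

/-- The generalized Cantor set: intersection over `n` of the unions of rank-`n` intervals. -/
def genCantorSet (p : ℕ → ℝ) : Set ℝ :=
  ⋂ n : ℕ, ⋃ s : Fin n → Bool, Set.Icc (leftPt p s) (leftPt p s + lam p n)

/-!
Pushing the fair coin measure forward along the address map gives a probability measure on
`genCantorSet p` with mass `2⁻¹ ^ n` on every rank-`n` interval. Distinct rank-`n` intervals have
left endpoints more than `λ_n` apart, so a set of diameter at most `λ_n` meets at most two of them
and has mass at most `2 * 2⁻¹ ^ n`. As `p n → 0`, `λ_{n+1} / λ_n → 1/2`, so for every `d < 1`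
eventually `2⁻¹ ^ n ≤ K * λ_n ^ d`, and the mass distribution principle gives `d ≤ dimH`.
-/
open Set Finset
open scoped NNReal ENNReal Topology

theorem Finset.card_le_two_of_lt_abs_sub {α : Type*} (T : Finset α) (f : α → ℝ) {g : ℝ}
    (hsep : ∀ a ∈ T, ∀ b ∈ T, a ≠ b → g < |f a - f b|)
    (hdiam : ∀ a ∈ T, ∀ b ∈ T, |f a - f b| ≤ 2 * g) : #T ≤ 2 := by
  by_contra! hT
  obtain ⟨a, b, c, ha, hb, hc, hab, hac, hbc⟩ := two_lt_card_iff.1 hT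
  have := hsep a ha b hb hab
  have := hsep a ha c hc hac
  have := hsep b hb c hc hbc
  have := hdiam a ha b hb
  have := hdiam a ha c hc
  have := hdiam b hb c hc
  rcases abs_cases (f a - f b) with ⟨_, _⟩ | ⟨_, _⟩ <;>
    rcases abs_cases (f a - f c) with ⟨_, _⟩ | ⟨_, _⟩ <;>
    rcases abs_cases (f b - f c) with ⟨_, _⟩ | ⟨_, _⟩ <;> linarith

theorem Antitone.exists_succ_lt_le {α : Type*} [LinearOrder α] {r : ℕ → α} (hr : Antitone r)
    {δ : α} {N : ℕ} (hN : δ ≤ r N) (h : ∃ m, r m < δ) :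
    ∃ n, N ≤ n ∧ r (n + 1) < δ ∧ δ ≤ r n := by
  classical
  have hN' : N < Nat.find h := by
    by_contra! hle
    exact (Nat.find_spec h).not_ge (hN.trans (hr hle))
  refine ⟨Nat.find h - 1, by omega, ?_, not_lt.1 (Nat.find_min h (by omega))⟩
  rw [Nat.sub_add_cancel (by omega)]
  exact Nat.find_spec h

/-- The mass distribution principle, in a discrete-scale form. -/
theorem le_dimH_of_measure_le_of_ediam_le {X : Type*} [EMetricSpace X] [MeasurableSpace X]
    [BorelSpace X] (ν : Measure X) {s : Set X} (hs : ν s ≠ 0) {r m : ℕ → ℝ≥0∞}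
    (hr : Antitone r) (hr_pos : ∀ n, 0 < r n) (hr0 : Tendsto r atTop (𝓝 0))
    (hm0 : Tendsto m atTop (𝓝 0)) (hν : ∀ n t, Metric.ediam t ≤ r n → ν t ≤ m n)
    {d : ℝ≥0} {C : ℝ≥0∞} (hC : C ≠ ∞) (hmr : ∀ᶠ n in atTop, m n ≤ C * r (n + 1) ^ (d : ℝ)) :
    (d : ℝ≥0∞) ≤ dimH s := by
  obtain ⟨N, hN⟩ := eventually_atTop.1 hmr
  have hbound : ∀ t, Metric.ediam t ≤ r N → ν t ≤ C * Metric.ediam t ^ (d : ℝ) := by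
    intro t ht
    rcases eq_zero_or_pos (Metric.ediam t) with h0 | hpos
    · have hνt : ν t ≤ 0 := ge_of_tendsto' hm0 fun n ↦ hν n t (h0 ▸ zero_le)
      exact hνt.trans zero_le
    obtain ⟨n, hNn, hlt, hle⟩ := hr.exists_succ_lt_le ht (hr0.eventually (gt_mem_nhds hpos)).exists
    calc ν t ≤ m n := hν n t hle
      _ ≤ C * r (n + 1) ^ (d : ℝ) := hN n hNn
      _ ≤ C * Metric.ediam t ^ (d : ℝ) := by gcongr
  have hle : C⁻¹ • ν ≤ μH[d] := by
    refine Measure.le_hausdorffMeasure d _ (r N) (hr_pos N) fun t ht ↦ ?_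
    calc (C⁻¹ • ν) t ≤ C⁻¹ * (C * Metric.ediam t ^ (d : ℝ)) := by
          rw [Measure.smul_apply, smul_eq_mul]
          gcongr
          exact hbound t ht
      _ ≤ Metric.ediam t ^ (d : ℝ) := by
          rw [← mul_assoc]
          exact mul_le_of_le_one_left zero_le (ENNReal.inv_mul_le_one C)
  refine le_dimH_of_hausdorffMeasure_ne_zero (pos_iff_ne_zero.1 ?_)
  exact (pos_iff_ne_zero.2 (mul_ne_zero (ENNReal.inv_ne_zero.2 hC) hs)).trans_le (hle s)

noncomputable def coinFlips : Measure (ℕ → Bool) :=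
  Measure.infinitePi fun _ ↦ (PMF.uniformOfFintype Bool).toMeasure

instance : IsProbabilityMeasure coinFlips := by
  unfold coinFlips
  infer_instance

theorem coinFlips_setOf_prefix_eq_le (n : ℕ) (t : Fin n → Bool) :
    coinFlips {ω | (fun i : Fin n ↦ ω i) = t} ≤ 2⁻¹ ^ n := by
  rcases eq_empty_or_nonempty {ω : ℕ → Bool | (fun i : Fin n ↦ ω i) = t} with h | ⟨ω₀, hω₀⟩
  · simp [h]
  have hpi : {ω : ℕ → Bool | (fun i : Fin n ↦ ω i) = t} =
      (Finset.range n : Set ℕ).pi fun i ↦ {ω₀ i} := by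
    ext ω
    simp [← hω₀.out, funext_iff, Fin.forall_iff]
  rw [hpi, coinFlips, Measure.infinitePi_pi _ fun i _ ↦ measurableSet_singleton _]
  simp [PMF.uniformOfFintype_apply]

section Lam

variable {p : ℕ → ℝ}

theorem lam_succ (n : ℕ) : lam p (n + 1) = lam p n * ((1 - p n) / 2) :=
  prod_range_succ _ n

theorem lam_pos (hp : ∀ n, p n < 1) (n : ℕ) : 0 < lam p n :=
  prod_pos fun j _ ↦ by linarith [hp j]

theorem two_mul_lam_succ_lt (hp : ∀ n, p n ∈ Ioo (0 : ℝ) 1) (n : ℕ) :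
    2 * lam p (n + 1) < lam p n := by
  have := lam_pos (fun j ↦ (hp j).2) n
  rw [lam_succ]
  nlinarith [(hp n).1]

theorem lam_succ_le (hp : ∀ n, p n ∈ Ioo (0 : ℝ) 1) (n : ℕ) : lam p (n + 1) ≤ lam p n := by
  linarith [two_mul_lam_succ_lt hp n, lam_pos (fun j ↦ (hp j).2) (n + 1)]

theorem lam_antitone (hp : ∀ n, p n ∈ Ioo (0 : ℝ) 1) : Antitone (lam p) :=
  antitone_nat_of_succ_le (lam_succ_le hp)

theorem lam_le_inv_two_pow (hp : ∀ n, p n ∈ Ioo (0 : ℝ) 1) (n : ℕ) : lam p n ≤ 2⁻¹ ^ n := by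
  calc lam p n ≤ ∏ _j ∈ range n, (2 : ℝ)⁻¹ :=
        prod_le_prod (fun j _ ↦ by linarith [(hp j).2]) fun j _ ↦ by linarith [(hp j).1]
    _ = 2⁻¹ ^ n := by rw [prod_const, card_range]

theorem tendsto_lam_atTop_zero (hp : ∀ n, p n ∈ Ioo (0 : ℝ) 1) :
    Tendsto (lam p) atTop (𝓝 0) :=
  squeeze_zero (fun n ↦ (lam_pos (fun j ↦ (hp j).2) n).le) (lam_le_inv_two_pow hp)
    (tendsto_pow_atTop_nhds_zero_of_lt_one (by norm_num) (by norm_num))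

theorem sum_Ico_lam_sub {m n : ℕ} (hmn : m ≤ n) :
    ∑ i ∈ Ico m n, (lam p i - lam p (i + 1)) = lam p m - lam p n := by
  rw [← neg_sub, ← sum_Ico_sub _ hmn, ← sum_neg_distrib]
  simp only [neg_sub]

end Lam

section CantorMap

variable {p : ℕ → ℝ}

/-- The offset of the child chosen by the digit `ω i` inside its rank-`i` parent interval. -/
noncomputable def digitShift (p : ℕ → ℝ) (ω : ℕ → Bool) (i : ℕ) : ℝ :=
  if ω i then lam p i - lam p (i + 1) else 0

noncomputable def cantorMap (p : ℕ → ℝ) (ω : ℕ → Bool) : ℝ :=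
  ∑' i, digitShift p ω i

theorem leftPt_restrict (ω : ℕ → Bool) (n : ℕ) :
    leftPt p (fun i : Fin n ↦ ω i) = ∑ i ∈ range n, digitShift p ω i :=
  Fin.sum_univ_eq_sum_range (digitShift p ω) n

theorem digitShift_nonneg (hp : ∀ n, p n ∈ Ioo (0 : ℝ) 1) (ω : ℕ → Bool) (i : ℕ) :
    0 ≤ digitShift p ω i := by
  unfold digitShift
  split_ifs
  exacts [sub_nonneg.2 (lam_succ_le hp i), le_rfl]

theorem digitShift_le (hp : ∀ n, p n ∈ Ioo (0 : ℝ) 1) (ω : ℕ → Bool) (i : ℕ) :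
    digitShift p ω i ≤ lam p i - lam p (i + 1) := by
  unfold digitShift
  split_ifs
  exacts [le_rfl, sub_nonneg.2 (lam_succ_le hp i)]

theorem sum_range_digitShift_mem_Icc (hp : ∀ n, p n ∈ Ioo (0 : ℝ) 1) (ω : ℕ → Bool)
    {m n : ℕ} (hmn : m ≤ n) :
    ∑ i ∈ range n, digitShift p ω i ∈
      Icc (∑ i ∈ range m, digitShift p ω i)
        (∑ i ∈ range m, digitShift p ω i + (lam p m - lam p n)) := by
  rw [← sum_range_add_sum_Ico _ hmn]
  refine ⟨le_add_of_nonneg_right (sum_nonneg fun i _ ↦ digitShift_nonneg hp ω i), ?_⟩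
  grw [add_le_add_iff_left, ← sum_Ico_lam_sub hmn]
  exact sum_le_sum fun i _ ↦ digitShift_le hp ω i

theorem summable_lam_sub (hp : ∀ n, p n ∈ Ioo (0 : ℝ) 1) :
    Summable fun i ↦ lam p i - lam p (i + 1) :=
  summable_of_sum_range_le (c := 1) (fun i ↦ sub_nonneg.2 (lam_succ_le hp i)) fun n ↦ by
    rw [sum_range_sub', lam, range_zero, Finset.prod_empty]
    linarith [lam_pos (fun j ↦ (hp j).2) n]

theorem summable_digitShift (hp : ∀ n, p n ∈ Ioo (0 : ℝ) 1) (ω : ℕ → Bool) :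
    Summable (digitShift p ω) :=
  (summable_lam_sub hp).of_nonneg_of_le (digitShift_nonneg hp ω) (digitShift_le hp ω)

theorem continuous_cantorMap (hp : ∀ n, p n ∈ Ioo (0 : ℝ) 1) : Continuous (cantorMap p) :=
  continuous_tsum (fun i ↦ (continuous_of_discreteTopology
      (f := fun b : Bool ↦ if b then lam p i - lam p (i + 1) else 0)).comp (continuous_apply i))
    (summable_lam_sub hp) fun i ω ↦ by
      rw [Real.norm_of_nonneg (digitShift_nonneg hp ω i)]
      exact digitShift_le hp ω i

theorem cantorMap_mem_Icc (hp : ∀ n, p n ∈ Ioo (0 : ℝ) 1) (ω : ℕ → Bool) (n : ℕ) :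
    cantorMap p ω ∈ Icc (leftPt p (fun i : Fin n ↦ ω i))
      (leftPt p (fun i : Fin n ↦ ω i) + lam p n) := by
  rw [leftPt_restrict]
  refine isClosed_Icc.mem_of_tendsto (summable_digitShift hp ω).hasSum.tendsto_sum_nat ?_
  filter_upwards [eventually_ge_atTop n] with m hnm
  have hm := sum_range_digitShift_mem_Icc hp ω hnm
  exact ⟨hm.1, hm.2.trans (by linarith [lam_pos (fun j ↦ (hp j).2) m])⟩

theorem cantorMap_mem_genCantorSet (hp : ∀ n, p n ∈ Ioo (0 : ℝ) 1) (ω : ℕ → Bool) :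
    cantorMap p ω ∈ genCantorSet p :=
  mem_iInter.2 fun n ↦ mem_iUnion.2 ⟨_, cantorMap_mem_Icc hp ω n⟩

theorem sum_range_digitShift_add_lam_lt (hp : ∀ n, p n ∈ Ioo (0 : ℝ) 1) {ω ω' : ℕ → Bool}
    {i n : ℕ} (hin : i < n) (hagree : ∀ j < i, ω j = ω' j) (hω : ω i = false)
    (hω' : ω' i = true) :
    ∑ j ∈ range n, digitShift p ω j + lam p n < ∑ j ∈ range n, digitShift p ω' j := by
  have hprefix : ∑ j ∈ range i, digitShift p ω j = ∑ j ∈ range i, digitShift p ω' j :=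
    sum_congr rfl fun j hj ↦ by rw [digitShift, digitShift, hagree j (mem_range.1 hj)]
  have hupper := (sum_range_digitShift_mem_Icc hp ω hin).2
  have hlower := (sum_range_digitShift_mem_Icc hp ω' hin).1
  rw [sum_range_succ, digitShift, hω] at hupper
  rw [sum_range_succ, digitShift, hω'] at hlower
  simp only [Bool.false_eq_true, if_false, if_true, add_zero] at hupper hlower
  linarith [two_mul_lam_succ_lt hp i]

theorem lam_lt_abs_sub_of_exists_ne (hp : ∀ n, p n ∈ Ioo (0 : ℝ) 1) {ω ω' : ℕ → Bool}
    {n : ℕ} (h : ∃ i < n, ω i ≠ ω' i) :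
    lam p n < |∑ j ∈ range n, digitShift p ω j - ∑ j ∈ range n, digitShift p ω' j| := by
  classical
  obtain ⟨hin, hne⟩ := Nat.find_spec h
  have hagree : ∀ j < Nat.find h, ω j = ω' j := fun j hj ↦
    not_not.1 fun hj' ↦ Nat.find_min h hj ⟨hj.trans hin, hj'⟩
  cases hω : ω (Nat.find h) <;> cases hω' : ω' (Nat.find h)
  · exact absurd (hω.trans hω'.symm) hne
  · rw [abs_sub_comm, lt_abs]
    left
    linarith [sum_range_digitShift_add_lam_lt hp hin hagree hω hω']
  · rw [lt_abs]
    left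
    linarith [sum_range_digitShift_add_lam_lt hp hin (fun j hj ↦ (hagree j hj).symm) hω' hω]
  · exact absurd (hω.trans hω'.symm) hne

end CantorMap

section CantorMeasure

variable {p : ℕ → ℝ}

/-- Gives mass `2⁻¹ ^ n` to each rank-`n` interval. -/
noncomputable def cantorMeasure (p : ℕ → ℝ) : Measure ℝ :=
  coinFlips.map (cantorMap p)

theorem card_prefixes_le_two_of_ediam_le (hp : ∀ n, p n ∈ Ioo (0 : ℝ) 1) {A : Set ℝ} {n : ℕ}
    (hA : Metric.ediam A ≤ ENNReal.ofReal (lam p n)) (T : Finset (Fin n → Bool))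
    (hT : ∀ t ∈ T, ∃ ω, cantorMap p ω ∈ A ∧ (fun i : Fin n ↦ ω i) = t) : #T ≤ 2 := by
  refine T.card_le_two_of_lt_abs_sub (leftPt p) (g := lam p n) (fun a ha b hb hab ↦ ?_)
    fun a ha b hb ↦ ?_
  · obtain ⟨ω, -, rfl⟩ := hT a ha
    obtain ⟨ω', -, rfl⟩ := hT b hb
    rw [leftPt_restrict, leftPt_restrict]
    refine lam_lt_abs_sub_of_exists_ne hp ?_
    contrapose! hab
    exact funext fun i ↦ hab i i.isLt
  · obtain ⟨ω, hωA, rfl⟩ := hT a ha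
    obtain ⟨ω', hω'A, rfl⟩ := hT b hb
    have hx := cantorMap_mem_Icc hp ω n
    have hy := cantorMap_mem_Icc hp ω' n
    have hdist : |cantorMap p ω - cantorMap p ω'| ≤ lam p n := by
      have := (Metric.edist_le_ediam_of_mem hωA hω'A).trans hA
      rwa [edist_dist, ENNReal.ofReal_le_ofReal_iff (lam_pos (fun j ↦ (hp j).2) n).le,
        Real.dist_eq] at this
    rw [abs_le] at hdist ⊢
    constructor <;> linarith [hx.1, hx.2, hy.1, hy.2]

theorem cantorMeasure_le_of_ediam_le (hp : ∀ n, p n ∈ Ioo (0 : ℝ) 1) {A : Set ℝ} {n : ℕ}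
    (hA : Metric.ediam A ≤ ENNReal.ofReal (lam p n)) :
    cantorMeasure p A ≤ 2 * 2⁻¹ ^ n := by
  classical
  let T : Finset (Fin n → Bool) :=
    {t | ∃ ω, cantorMap p ω ∈ closure A ∧ (fun i : Fin n ↦ ω i) = t}
  have hcover : cantorMap p ⁻¹' closure A ⊆ ⋃ t ∈ T, {ω | (fun i : Fin n ↦ ω i) = t} :=
    fun ω hω ↦ mem_biUnion (by simpa [T] using ⟨ω, hω, rfl⟩) rfl
  have hT : #T ≤ 2 :=
    card_prefixes_le_two_of_ediam_le hp (by rwa [Metric.ediam_closure]) T (by simp [T])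
  calc cantorMeasure p A ≤ cantorMeasure p (closure A) := measure_mono subset_closure
    _ = coinFlips (cantorMap p ⁻¹' closure A) :=
      Measure.map_apply (continuous_cantorMap hp).measurable isClosed_closure.measurableSet
    _ ≤ ∑ t ∈ T, coinFlips {ω | (fun i : Fin n ↦ ω i) = t} :=
      (measure_mono hcover).trans (measure_biUnion_finset_le _ _)
    _ ≤ ∑ _t ∈ T, 2⁻¹ ^ n := sum_le_sum fun t _ ↦ coinFlips_setOf_prefix_eq_le n t
    _ = #T * 2⁻¹ ^ n := by rw [sum_const, nsmul_eq_mul]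
    _ ≤ 2 * 2⁻¹ ^ n := by gcongr; exact_mod_cast hT

theorem cantorMeasure_genCantorSet_ne_zero (hp : ∀ n, p n ∈ Ioo (0 : ℝ) 1) :
    cantorMeasure p (genCantorSet p) ≠ 0 := by
  have h := Measure.le_map_apply (continuous_cantorMap hp).measurable.aemeasurable
    (μ := coinFlips) (genCantorSet p)
  have hpre : cantorMap p ⁻¹' genCantorSet p = univ :=
    eq_univ_of_forall (cantorMap_mem_genCantorSet hp)
  rw [hpre, measure_univ] at h
  exact (zero_lt_one.trans_le h).ne'

end CantorMeasure

section Scaling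

variable {p : ℕ → ℝ}

theorem eventually_inv_two_pow_le_mul_lam_rpow (hp : ∀ n, p n ∈ Ioo (0 : ℝ) 1)
    (hp0 : Tendsto p atTop (𝓝 0)) {d : ℝ} (hd : d < 1) :
    ∃ K : ℝ, ∀ᶠ n in atTop, (2 : ℝ)⁻¹ ^ n ≤ K * lam p n ^ d := by
  have hlam := lam_pos fun j ↦ (hp j).2
  have hlim : Tendsto (fun n ↦ ((1 - p n) / 2) ^ d) atTop (𝓝 ((2 : ℝ)⁻¹ ^ d)) := by
    have := ((tendsto_const_nhds (x := (1 : ℝ)).sub hp0).div_const 2).rpow_const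
      (p := d) (Or.inl (by norm_num))
    simpa using this
  have hgt : (2 : ℝ)⁻¹ < 2⁻¹ ^ d := by
    simpa using Real.rpow_lt_rpow_of_exponent_gt (by norm_num : (0 : ℝ) < 2⁻¹) (by norm_num) hd
  obtain ⟨N, hN⟩ := eventually_atTop.1 (hlim.eventually (lt_mem_nhds hgt))
  refine ⟨2⁻¹ ^ N / lam p N ^ d, eventually_atTop.2 ⟨N, fun n hn ↦ ?_⟩⟩
  induction n, hn using Nat.le_induction with
  | base => rw [div_mul_cancel₀ _ (Real.rpow_pos_of_pos (hlam N) d).ne']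
  | succ n hn ih =>
    rw [lam_succ, Real.mul_rpow (hlam n).le (by linarith [(hp n).2]), ← mul_assoc, pow_succ]
    exact mul_le_mul ih (hN n hn).le (by norm_num) ((by positivity : (0 : ℝ) ≤ 2⁻¹ ^ n).trans ih)

theorem exists_eventually_two_mul_inv_two_pow_le (hp : ∀ n, p n ∈ Ioo (0 : ℝ) 1)
    (hp0 : Tendsto p atTop (𝓝 0)) {d : ℝ≥0} (hd : d < 1) :
    ∃ C ≠ ∞, ∀ᶠ n in atTop,
      2 * (2 : ℝ≥0∞)⁻¹ ^ n ≤ C * ENNReal.ofReal (lam p (n + 1)) ^ (d : ℝ) := by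
  obtain ⟨K, hK⟩ := eventually_inv_two_pow_le_mul_lam_rpow hp hp0 (d := d) (by exact_mod_cast hd)
  refine ⟨ENNReal.ofReal (4 * K), ENNReal.ofReal_ne_top, ?_⟩
  filter_upwards [(tendsto_add_atTop_nat 1).eventually hK] with n hn
  have hlam := lam_pos (fun j ↦ (hp j).2) (n + 1)
  calc 2 * (2 : ℝ≥0∞)⁻¹ ^ n = ENNReal.ofReal (2 * 2⁻¹ ^ n) := by
        rw [ENNReal.ofReal_mul (by norm_num), ENNReal.ofReal_pow (by norm_num),
          ENNReal.ofReal_inv_of_pos (by norm_num), ENNReal.ofReal_ofNat]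
    _ = ENNReal.ofReal (4 * 2⁻¹ ^ (n + 1)) := by ring_nf
    _ ≤ ENNReal.ofReal (4 * (K * lam p (n + 1) ^ (d : ℝ))) := by gcongr
    _ = ENNReal.ofReal (4 * K) * ENNReal.ofReal (lam p (n + 1)) ^ (d : ℝ) := by
        rw [ENNReal.ofReal_rpow_of_nonneg hlam.le d.coe_nonneg,
          ← ENNReal.ofReal_mul' (Real.rpow_nonneg hlam.le _), mul_assoc]

end Scaling

/-- If `p n ∈ (0,1)` and `p n → 0`, the generalized Cantor set `C_P` has Hausdorff
dimension `1`. -/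
theorem genCantorSet_dimH_eq_one (p : ℕ → ℝ) (hp : ∀ n, p n ∈ Set.Ioo (0 : ℝ) 1)
    (hp0 : Tendsto p atTop (nhds 0)) :
    dimH (genCantorSet p) = 1 := by
  refine le_antisymm ((dimH_mono (subset_univ _)).trans_eq Real.dimH_univ) ?_
  refine ENNReal.le_of_forall_nnreal_lt fun d hd ↦ ?_
  obtain ⟨C, hC, hmr⟩ := exists_eventually_two_mul_inv_two_pow_le hp hp0 (by exact_mod_cast hd)
  have hr0 : Tendsto (fun n ↦ ENNReal.ofReal (lam p n)) atTop (𝓝 0) := by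
    simpa using ENNReal.tendsto_ofReal (tendsto_lam_atTop_zero hp)
  have hm0 : Tendsto (fun n ↦ 2 * (2 : ℝ≥0∞)⁻¹ ^ n) atTop (𝓝 0) := by
    simpa using ENNReal.Tendsto.const_mul
      (ENNReal.tendsto_pow_atTop_nhds_zero_of_lt_one (r := 2⁻¹) (by norm_num))
      (Or.inr ENNReal.ofNat_ne_top)
  exact le_dimH_of_measure_le_of_ediam_le (cantorMeasure p) (cantorMeasure_genCantorSet_ne_zero hp)
    (fun m n h ↦ ENNReal.ofReal_le_ofReal (lam_antitone hp h))
    (fun n ↦ ENNReal.ofReal_pos.2 (lam_pos (fun j ↦ (hp j).2) n)) hr0 hm0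
    (fun n t ht ↦ cantorMeasure_le_of_ediam_le hp ht) hC hmr
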